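/- arXiv:2507.00728 — 5 statements merged into one kernel-verified Lean document; each statement's English description precedes it below -/
import Mathlib

section
/- Let S_n be a star graph with centre x and leaves v₁,…,v_n, let λ assign to each edge x v_j a finite set of positive integer time labels, and let τ be the largest label. Define F : V(S_n) × V(S_n) × {1,…,τ+1} × {1,…,τ+1} → ℕ ∪ {∞} by F(u,w,t₁,t₂) = 1 if uw is an edge of S_n, t₁ ∈ λ(uw) and t₂ = t₁+1; F(v,v,t₁,t₂) = 0 whenever t₁ < t₂; and F(u,w,t₁,t₂) = ∞ otherwise. Then there exists a valid walk on (S_n,F) from x to x that visits all n+1 vertices and has cost at most 2n if and only if there exists an ordering v_{σ(1)},…,v_{σ(n)} of the leaves and times t₁ < t₂ < ⋯ < t_{2n} such that for each 1 ≤ j ≤ n both t_{2j-1} and t_{2j} belong to λ(x v_{σ(j)}). -/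
/-- The source vertex of a quadruple `(u, v, t₁, t₂)`. -/
def qsrc {V : Type*} (q : V × V × ℕ × ℕ) : V := q.1

/-- The destination vertex of a quadruple `(u, v, t₁, t₂)`. -/
def qdst {V : Type*} (q : V × V × ℕ × ℕ) : V := q.2.1

/-- The departure time of a quadruple `(u, v, t₁, t₂)`. -/
def qdep {V : Type*} (q : V × V × ℕ × ℕ) : ℕ := q.2.2.1

/-- The arrival time of a quadruple `(u, v, t₁, t₂)`. -/
def qarr {V : Type*} (q : V × V × ℕ × ℕ) : ℕ := q.2.2.2

/-- A valid walk on a temporal cost graph with cost function `F`: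
consecutive quadruples match up, every quadruple has `t < t'` and finite cost,
and arrival times precede subsequent departure times. -/
def IsValidWalk {V : Type*} (F : V → V → ℕ → ℕ → ℕ∞) (W : List (V × V × ℕ × ℕ)) : Prop :=
  (∀ i, ∀ hi : i + 1 < W.length, qdst (W[i]'(Nat.lt_of_succ_lt hi)) = qsrc (W[i + 1]'hi)) ∧
  (∀ q ∈ W, qdep q < qarr q ∧ F (qsrc q) (qdst q) (qdep q) (qarr q) < ⊤) ∧
  (∀ i, ∀ hi : i + 1 < W.length, qarr (W[i]'(Nat.lt_of_succ_lt hi)) ≤ qdep (W[i + 1]'hi))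

/-- The cost of a walk: the sum of the costs of its quadruples. -/
def walkCost {V : Type*} (F : V → V → ℕ → ℕ → ℕ∞) (W : List (V × V × ℕ × ℕ)) : ℕ∞ :=
  (W.map fun q => F (qsrc q) (qdst q) (qdep q) (qarr q)).sum

/-- The list of vertices visited by a walk, namely `u₁, v₁, v₂, …, v_ℓ`. -/
def visited {V : Type*} : List (V × V × ℕ × ℕ) → List V
  | [] => []
  | q :: rest => qsrc q :: (q :: rest).map qdst

/-- The (nonempty) walk `W` is from `s` to `t`. -/
def WalkFrom {V : Type*} (W : List (V × V × ℕ × ℕ)) (s t : V) : Prop :=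
  ∃ q1 ql, W.head? = some q1 ∧ W.getLast? = some ql ∧ qsrc q1 = s ∧ qdst ql = t

/-- The cost function of the temporal cost graph obtained from a temporal star
`(Sₙ, λ)` with centre `none` and leaves `some j`: traversing an edge costs `1`
exactly when the departure time is a label of that edge and the arrival time is
one later; staying put is free; everything else is impossible. -/
noncomputable def starF {n : ℕ} (lam : Fin n → Finset ℕ) :
    Option (Fin n) → Option (Fin n) → ℕ → ℕ → ℕ∞ := fun u w t₁ t₂ =>
  if u = w then (if t₁ < t₂ then 0 else ⊤)
  else
    match u, w with
    | none, some j => if t₁ ∈ lam j ∧ t₂ = t₁ + 1 then 1 else ⊤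
    | some j, none => if t₁ ∈ lam j ∧ t₂ = t₁ + 1 then 1 else ⊤
    | _, _ => ⊤

/-!
Dropping the free waiting steps of a walk leaves its moves, each of cost one along an edge of
the star. A closed walk at the centre therefore alternates centre → leaf → centre and consists
of `m` round trips, with strictly increasing departure times. Visiting all `n` leaves needs
`m ≥ n`, and cost at most `2n` forces `m ≤ n`; so each leaf is visited by exactly one round trip,
whose two departure times are labels of its edge. Conversely, a schedule `σ, t` is realised by
the walk that leaves for `σ j` at time `t (2j)` and returns at time `t (2j + 1)`.
-/

section Walks

variable {V : Type*}

inductive IsChainFromTo : V → List (V × V × ℕ × ℕ) → V → Prop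
  | nil (v : V) : IsChainFromTo v [] v
  | cons {q : V × V × ℕ × ℕ} {W : List (V × V × ℕ × ℕ)} {e : V} :
      IsChainFromTo (qdst q) W e → IsChainFromTo (qsrc q) (q :: W) e

theorem mem_visited_of_mem {W : List (V × V × ℕ × ℕ)} {q : V × V × ℕ × ℕ} (h : q ∈ W) :
    qdst q ∈ visited W := by
  cases W with
  | nil => simp at h
  | cons a W => exact List.mem_cons_of_mem _ (List.mem_map_of_mem h)

namespace IsChainFromTo

@[simp]
theorem nil_iff {s e : V} : IsChainFromTo s [] e ↔ s = e :=
  ⟨fun h => by cases h; rfl, fun h => h ▸ nil s⟩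

@[simp]
theorem cons_iff {s e : V} {q : V × V × ℕ × ℕ} {W : List (V × V × ℕ × ℕ)} :
    IsChainFromTo s (q :: W) e ↔ qsrc q = s ∧ IsChainFromTo (qdst q) W e :=
  ⟨fun h => by cases h with | cons h => exact ⟨rfl, h⟩, fun ⟨hs, h⟩ => hs ▸ cons h⟩

theorem of_isChain : ∀ {W : List (V × V × ℕ × ℕ)} {q₁ qₗ : V × V × ℕ × ℕ},
    W.IsChain (fun a b => qdst a = qsrc b) → W.head? = some q₁ → W.getLast? = some qₗ →
    IsChainFromTo (qsrc q₁) W (qdst qₗ)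
  | [q], _, _, _, h₁, hₗ => by
    simp only [List.head?_cons, List.getLast?_singleton, Option.some_inj] at h₁ hₗ
    subst h₁ hₗ
    exact cons (nil _)
  | q :: r :: W, _, _, hc, h₁, hₗ => by
    simp only [List.head?_cons, Option.some_inj] at h₁
    rw [List.isChain_cons_cons] at hc
    have := of_isChain hc.2 rfl (by simpa using hₗ)
    rw [← hc.1] at this
    exact h₁ ▸ cons this

theorem filter_ne [DecidableEq V] {s e : V} {W : List (V × V × ℕ × ℕ)}
    (h : IsChainFromTo s W e) : IsChainFromTo s (W.filter fun q => qsrc q ≠ qdst q) e := by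
  induction h with
  | nil v => exact nil v
  | @cons q W e _ ih =>
    by_cases hq : qsrc q = qdst q
    · rw [List.filter_cons_of_neg (by simpa using hq), hq]
      exact ih
    · rw [List.filter_cons_of_pos (by simpa using hq)]
      exact cons ih

theorem exists_mem_filter_ne_of_mem_visited [DecidableEq V] {s e v : V}
    {W : List (V × V × ℕ × ℕ)} (h : IsChainFromTo s W e) (hv : v ∈ visited W) (hvs : v ≠ s) :
    ∃ q ∈ W.filter (fun q => qsrc q ≠ qdst q), qdst q = v := by
  induction h with
  | nil => simp [visited] at hv
  | @cons q W e _ ih =>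
    by_cases hvq : v = qdst q
    · subst hvq
      exact ⟨q, List.mem_filter.mpr ⟨List.mem_cons_self, by simpa using Ne.symm hvs⟩, rfl⟩
    · rw [visited, List.map_cons, List.mem_cons, List.mem_cons] at hv
      obtain ⟨r, hr, rfl⟩ := List.mem_map.mp (hv.resolve_left hvs |>.resolve_left hvq)
      obtain ⟨q', hq', hq'v⟩ := ih (mem_visited_of_mem hr) hvq
      exact ⟨q', List.mem_filter.mpr
        ⟨List.mem_cons_of_mem _ (List.mem_of_mem_filter hq'), (List.mem_filter.mp hq').2⟩, hq'v⟩

theorem exists_round_trips {c : V} : ∀ {M : List (V × V × ℕ × ℕ)}, IsChainFromTo c M c →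
    (∀ q ∈ M, Xor (qsrc q = c) (qdst q = c)) →
    ∃ m, ∃ hm : M.length = 2 * m, ∀ k (hk : k < m),
      qsrc (M[2 * k]'(by omega)) = c ∧
      qdst (M[2 * k]'(by omega)) = qsrc (M[2 * k + 1]'(by omega)) ∧
      qdst (M[2 * k + 1]'(by omega)) = c
  | [], _, _ => ⟨0, rfl, fun _ hk => absurd hk (Nat.not_lt_zero _)⟩
  | [q], h, hx => by
    simp only [cons_iff, nil_iff] at h
    simpa [h.1, h.2] using hx q List.mem_cons_self
  | q :: r :: M, h, hx => by
    simp only [cons_iff] at h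
    obtain ⟨hq, hqr, hr⟩ := h
    simp only [List.forall_mem_cons] at hx
    obtain ⟨hxq, hxr, hx⟩ := hx
    have hrc : qdst r = c := by grind [Xor]
    obtain ⟨m, hm, hpairs⟩ := exists_round_trips (hrc ▸ hr) hx
    refine ⟨m + 1, by simp [hm]; ring, fun k hk => ?_⟩
    cases k with
    | zero => exact ⟨hq, hqr.symm, hrc⟩
    | succ k =>
      have := hpairs k (by omega)
      simpa [Nat.mul_succ] using this

end IsChainFromTo

theorem IsValidWalk.isChain {F : V → V → ℕ → ℕ → ℕ∞} {W : List (V × V × ℕ × ℕ)}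
    (h : IsValidWalk F W) : W.IsChain (fun a b => qdst a = qsrc b) :=
  List.isChain_iff_getElem.mpr h.1

theorem IsValidWalk.pairwise_qdep_lt {F : V → V → ℕ → ℕ → ℕ∞} {W : List (V × V × ℕ × ℕ)}
    (h : IsValidWalk F W) : W.Pairwise (fun a b => qdep a < qdep b) := by
  have : (W.map qdep).IsChain (· < ·) := by
    refine List.isChain_iff_getElem.mpr fun i hi => ?_
    simp only [List.getElem_map]
    have := h.2.2 i (by simpa using hi)
    have := (h.2.1 _ (List.getElem_mem (l := W) (n := i) (by simp at hi; omega))).1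
    omega
  exact List.pairwise_map.mp this.pairwise

theorem walkCost_eq_length_filter [DecidableEq V] {F : V → V → ℕ → ℕ → ℕ∞}
    {W : List (V × V × ℕ × ℕ)}
    (h : ∀ q ∈ W, F (qsrc q) (qdst q) (qdep q) (qarr q) = if qsrc q = qdst q then 0 else 1) :
    walkCost F W = (W.filter fun q => qsrc q ≠ qdst q).length := by
  induction W with
  | nil => simp [walkCost]
  | cons q W ih =>
    simp only [List.forall_mem_cons] at h
    simp only [walkCost, List.map_cons, List.sum_cons] at ih ⊢
    rw [h.1, ih h.2]
    by_cases hq : qsrc q = qdst q <;> simp [hq, add_comm]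

end Walks

section Star

variable {n : ℕ} {lam : Fin n → Finset ℕ}

theorem starF_eq_ite_of_lt_top {u w : Option (Fin n)} {t₁ t₂ : ℕ} (hlt : t₁ < t₂)
    (h : starF lam u w t₁ t₂ < ⊤) : starF lam u w t₁ t₂ = if u = w then 0 else 1 := by
  unfold starF at h ⊢
  split_ifs at h ⊢ <;> grind

theorem xor_of_starF_lt_top {u w : Option (Fin n)} {t₁ t₂ : ℕ} (hne : u ≠ w)
    (h : starF lam u w t₁ t₂ < ⊤) : Xor (u = none) (w = none) := by
  unfold starF at h
  rcases u with _ | i <;> rcases w with _ | j <;> simp_all [Xor]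

theorem mem_of_starF_none_some_lt_top {j : Fin n} {t₁ t₂ : ℕ}
    (h : starF lam none (some j) t₁ t₂ < ⊤) : t₁ ∈ lam j := by
  by_contra hj
  simp [starF, hj] at h

theorem mem_of_starF_some_none_lt_top {j : Fin n} {t₁ t₂ : ℕ}
    (h : starF lam (some j) none t₁ t₂ < ⊤) : t₁ ∈ lam j := by
  by_contra hj
  simp [starF, hj] at h

theorem exists_schedule_of_moves {M : List (Option (Fin n) × Option (Fin n) × ℕ × ℕ)}
    (hchain : IsChainFromTo none M none)
    (hmoves : ∀ q ∈ M, qsrc q ≠ qdst q ∧ starF lam (qsrc q) (qdst q) (qdep q) (qarr q) < ⊤)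
    (hdep : M.Pairwise fun a b => qdep a < qdep b)
    (hleaves : ∀ j : Fin n, ∃ q ∈ M, qdst q = some j) (hlen : M.length ≤ 2 * n) :
    ∃ (σ : Equiv.Perm (Fin n)) (t : Fin (2 * n) → ℕ), StrictMono t ∧
      ∀ j : Fin n, t ⟨2 * (j : ℕ), by omega⟩ ∈ lam (σ j) ∧
        t ⟨2 * (j : ℕ) + 1, by omega⟩ ∈ lam (σ j) := by
  obtain ⟨m, hm, hpairs⟩ :=
    hchain.exists_round_trips fun q hq => xor_of_starF_lt_top (hmoves q hq).1 (hmoves q hq).2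
  have hleaf : ∀ k : Fin m, ∃ j, qdst (M[2 * (k : ℕ)]'(by omega)) = some j := by
    intro k
    have hx := hmoves _ (List.getElem_mem (l := M) (n := 2 * k) (by omega))
    exact Option.ne_none_iff_exists'.mp
      (by simpa [Xor, (hpairs k k.2).1] using xor_of_starF_lt_top hx.1 hx.2)
  choose σ hσ using hleaf
  have hsurj : Function.Surjective σ := by
    intro j
    obtain ⟨q, hq, hqj⟩ := hleaves j
    obtain ⟨i, hi, rfl⟩ := List.getElem_of_mem hq
    obtain ⟨k, rfl | rfl⟩ := Nat.even_or_odd' i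
    · exact ⟨⟨k, by omega⟩, Option.some_injective _ ((hσ _).symm.trans hqj)⟩
    · simp [(hpairs k (by omega)).2.2] at hqj
  obtain rfl : m = n :=
    le_antisymm (by omega) (by simpa using Fintype.card_le_of_surjective σ hsurj)
  refine ⟨Equiv.ofBijective σ hsurj.bijective_of_finite, fun i => qdep (M[(i : ℕ)]'(by omega)),
    fun a b hab => List.pairwise_iff_getElem.mp hdep _ _ _ _ hab, fun k => ?_⟩
  obtain ⟨hsrc, hmid, hdst⟩ := hpairs k k.2
  have hout := (hmoves _ (List.getElem_mem (l := M) (n := 2 * k) (by omega))).2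
  have hback := (hmoves _ (List.getElem_mem (l := M) (n := 2 * k + 1) (by omega))).2
  rw [hsrc, hσ] at hout
  rw [← hmid, hσ, hdst] at hback
  exact ⟨mem_of_starF_none_some_lt_top hout, mem_of_starF_some_none_lt_top hback⟩

theorem exists_schedule_of_isValidWalk {W : List (Option (Fin n) × Option (Fin n) × ℕ × ℕ)}
    (hW : IsValidWalk (starF lam) W) (hfrom : WalkFrom W none none)
    (hvisit : ∀ v, v ∈ visited W) (hcost : walkCost (starF lam) W ≤ ((2 * n : ℕ) : ℕ∞)) :
    ∃ (σ : Equiv.Perm (Fin n)) (t : Fin (2 * n) → ℕ), StrictMono t ∧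
      ∀ j : Fin n, t ⟨2 * (j : ℕ), by omega⟩ ∈ lam (σ j) ∧
        t ⟨2 * (j : ℕ) + 1, by omega⟩ ∈ lam (σ j) := by
  obtain ⟨q₁, qₗ, h₁, hₗ, hs, he⟩ := hfrom
  have hchain : IsChainFromTo none W none := by
    simpa [hs, he] using IsChainFromTo.of_isChain hW.isChain h₁ hₗ
  have hcostW : walkCost (starF lam) W = (W.filter fun q => qsrc q ≠ qdst q).length :=
    walkCost_eq_length_filter fun q hq => starF_eq_ite_of_lt_top (hW.2.1 q hq).1 (hW.2.1 q hq).2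
  refine exists_schedule_of_moves hchain.filter_ne (fun q hq => ?_) (hW.pairwise_qdep_lt.filter _)
    (fun j => hchain.exists_mem_filter_ne_of_mem_visited (hvisit _) (Option.some_ne_none j)) ?_
  · obtain ⟨hqW, hne⟩ := List.mem_filter.mp hq
    exact ⟨by simpa using hne, (hW.2.1 q hqW).2⟩
  · exact_mod_cast hcostW ▸ hcost

def starHop (σ : Fin n → Fin n) (t : Fin (2 * n) → ℕ) (i : Fin (2 * n)) :
    Option (Fin n) × Option (Fin n) × ℕ × ℕ :=
  if (i : ℕ) % 2 = 0 then (none, some (σ ⟨i / 2, by omega⟩), t i, t i + 1)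
  else (some (σ ⟨i / 2, by omega⟩), none, t i, t i + 1)

section StarHop

variable {σ : Fin n → Fin n} {t : Fin (2 * n) → ℕ}

theorem qsrc_starHop (i : Fin (2 * n)) :
    qsrc (starHop σ t i) = if (i : ℕ) % 2 = 0 then none else some (σ ⟨i / 2, by omega⟩) := by
  unfold starHop; split_ifs <;> rfl

theorem qdst_starHop (i : Fin (2 * n)) :
    qdst (starHop σ t i) = if (i : ℕ) % 2 = 0 then some (σ ⟨i / 2, by omega⟩) else none := by
  unfold starHop; split_ifs <;> rfl

theorem qdep_starHop (i : Fin (2 * n)) : qdep (starHop σ t i) = t i := by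
  unfold starHop; split_ifs <;> rfl

theorem qarr_starHop (i : Fin (2 * n)) : qarr (starHop σ t i) = t i + 1 := by
  unfold starHop; split_ifs <;> rfl

theorem starF_starHop (hlab : ∀ i : Fin (2 * n), t i ∈ lam (σ ⟨i / 2, by omega⟩))
    (i : Fin (2 * n)) :
    starF lam (qsrc (starHop σ t i)) (qdst (starHop σ t i))
      (qdep (starHop σ t i)) (qarr (starHop σ t i)) = 1 := by
  rw [qsrc_starHop, qdst_starHop, qdep_starHop, qarr_starHop]
  split_ifs <;> simp [starF, hlab i]

theorem isValidWalk_ofFn_starHop (hσ : Function.Injective σ) (hmono : StrictMono t)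
    (hlab : ∀ i : Fin (2 * n), t i ∈ lam (σ ⟨i / 2, by omega⟩)) :
    IsValidWalk (starF lam) (List.ofFn (starHop σ t)) := by
  refine ⟨fun i hi => ?_, fun q hq => ?_, fun i hi => ?_⟩
  · simp only [List.getElem_ofFn, qsrc_starHop, qdst_starHop]
    split_ifs <;>
      first | rfl | omega | (simp only [Option.some_inj, hσ.eq_iff, Fin.mk.injEq]; omega)
  · obtain ⟨i, rfl⟩ := List.mem_ofFn.mp hq
    exact ⟨by rw [qdep_starHop, qarr_starHop]; omega, by simp [starF_starHop hlab i]⟩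
  · simp only [List.getElem_ofFn, qdep_starHop, qarr_starHop]
    exact hmono (Fin.mk_lt_mk.mpr (Nat.lt_succ_self i))

theorem walkFrom_ofFn_starHop (hn : 0 < n) : WalkFrom (List.ofFn (starHop σ t)) none none := by
  refine ⟨starHop σ t ⟨0, by omega⟩, starHop σ t ⟨2 * n - 1, by omega⟩, ?_, ?_, ?_, ?_⟩
  · simp [List.head?_eq_getElem?, hn]
  · simp [List.getLast?_eq_getElem?, hn]
  · simp [qsrc_starHop]
  · simp [qdst_starHop]
    omega

theorem mem_visited_ofFn_starHop (hn : 0 < n) (hσ : Function.Surjective σ)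
    (v : Option (Fin n)) : v ∈ visited (List.ofFn (starHop σ t)) := by
  have hmem : ∀ i, starHop σ t i ∈ List.ofFn (starHop σ t) := fun i => List.mem_ofFn.mpr ⟨i, rfl⟩
  rcases v with _ | j
  · simpa [qdst_starHop] using mem_visited_of_mem (hmem ⟨1, by omega⟩)
  · obtain ⟨k, rfl⟩ := hσ j
    simpa [qdst_starHop] using mem_visited_of_mem (hmem ⟨2 * (k : ℕ), by omega⟩)

theorem walkCost_ofFn_starHop (hlab : ∀ i : Fin (2 * n), t i ∈ lam (σ ⟨i / 2, by omega⟩)) :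
    walkCost (starF lam) (List.ofFn (starHop σ t)) = ((2 * n : ℕ) : ℕ∞) := by
  simp only [walkCost, List.map_ofFn, List.sum_ofFn, Function.comp_def, starF_starHop hlab]
  simp

end StarHop

theorem exists_walk_of_schedule (σ : Equiv.Perm (Fin n)) (t : Fin (2 * n) → ℕ)
    (hmono : StrictMono t) (hmem : ∀ j : Fin n, t ⟨2 * (j : ℕ), by omega⟩ ∈ lam (σ j) ∧
        t ⟨2 * (j : ℕ) + 1, by omega⟩ ∈ lam (σ j)) :
    ∃ W : List (Option (Fin n) × Option (Fin n) × ℕ × ℕ),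
      IsValidWalk (starF lam) W ∧ WalkFrom W none none ∧ (∀ v, v ∈ visited W) ∧
        walkCost (starF lam) W ≤ ((2 * n : ℕ) : ℕ∞) := by
  rcases Nat.eq_zero_or_pos n with rfl | hn
  -- a walk `from none` must be nonempty, so for `n = 0` take a single waiting step
  · refine ⟨[(none, none, 0, 1)], ⟨by simp, by simp [qdep, qarr, starF, qsrc, qdst], by simp⟩,
      ⟨_, _, rfl, rfl, rfl, rfl⟩, fun v => ?_, by simp [walkCost, starF, qsrc, qdst, qdep, qarr]⟩
    rcases v with _ | j
    · simp [visited, qsrc]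
    · exact j.elim0
  have hlab : ∀ i : Fin (2 * n), t i ∈ lam (σ ⟨i / 2, by omega⟩) := by
    rintro ⟨i, hi⟩
    obtain ⟨k, rfl | rfl⟩ := Nat.even_or_odd' i
    · simpa using (hmem ⟨k, by omega⟩).1
    · have hk : (2 * k + 1) / 2 = k := by omega
      simpa [hk] using (hmem ⟨k, by omega⟩).2
  exact ⟨_, isValidWalk_ofFn_starHop σ.injective hmono hlab, walkFrom_ofFn_starHop hn,
    mem_visited_ofFn_starHop hn σ.surjective, (walkCost_ofFn_starHop hlab).le⟩

end Star

/-- There is a valid walk on the temporal cost graph of the star `(Sₙ, λ)` from the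
centre `x` back to `x` visiting all `n + 1` vertices with cost at most `2n` iff there
is an ordering of the leaves and strictly increasing times `t₁ < ⋯ < t_{2n}` such that
the `(2j-1)`-st and `(2j)`-th times are labels of the edge to the `j`-th leaf. -/
theorem star_exploration_iff {n : ℕ} (lam : Fin n → Finset ℕ) :
    (∃ W : List (Option (Fin n) × Option (Fin n) × ℕ × ℕ),
        IsValidWalk (starF lam) W ∧ WalkFrom W none none ∧
        (∀ v : Option (Fin n), v ∈ visited W) ∧
        walkCost (starF lam) W ≤ ((2 * n : ℕ) : ℕ∞)) ↔
    (∃ (σ : Equiv.Perm (Fin n)) (t : Fin (2 * n) → ℕ), StrictMono t ∧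
        ∀ j : Fin n, t ⟨2 * (j : ℕ), by have := j.isLt; omega⟩ ∈ lam (σ j) ∧
          t ⟨2 * (j : ℕ) + 1, by have := j.isLt; omega⟩ ∈ lam (σ j)) :=
  ⟨fun ⟨_, hW, hfrom, hvisit, hcost⟩ => exists_schedule_of_isValidWalk hW hfrom hvisit hcost,
    fun ⟨σ, t, hmono, hmem⟩ => exists_walk_of_schedule σ t hmono hmem⟩
end

section
/- Let (G,F) be a temporal cost graph whose underlying graph G is a tree, suppose every edge of G has maximum traversal number at most 3 in (G,F), and let W be a valid walk on (G,F) from a vertex s back to the same vertex s. Then every edge of G is traversed by W at most twice. -/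
/-- A traversal sequence for the edge `uv`: a sequence of pairs of times, each allowing
a finite-cost traversal of the edge in some direction, with each arrival time at most
the next departure time. -/
def TraversalSeq {V : Type*} (F : V → V → ℕ → ℕ → ℕ∞) (u v : V) (s : List (ℕ × ℕ)) : Prop :=
  (∀ p ∈ s, min (F u v p.1 p.2) (F v u p.1 p.2) < ⊤) ∧
  (∀ i, ∀ hi : i + 1 < s.length, (s[i]'(Nat.lt_of_succ_lt hi)).2 ≤ (s[i + 1]'hi).1)

/-! The times of the traversals of an edge `ab` by a valid walk form a traversal sequence, so
there are at most three of them. In a tree, `ab` is a bridge; colour each vertex by whether it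
reaches `a` in `G` without `ab`. A step of the walk changes colour exactly when it traverses `ab`,
so a closed walk traverses `ab` an even number of times. -/

section
variable {V : Type*}

def Traverses (a b : V) (q : V × V × ℕ × ℕ) : Prop :=
  (qsrc q = a ∧ qdst q = b) ∨ (qsrc q = b ∧ qdst q = a)

theorem traverses_iff {a b : V} {q : V × V × ℕ × ℕ} :
    Traverses a b q ↔ s(qsrc q, qdst q) = s(a, b) :=
  Sym2.eq_iff.symm

instance [DecidableEq V] (a b : V) : DecidablePred (Traverses a b) :=
  fun _ => inferInstanceAs (Decidable (_ ∨ _))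

theorem IsValidWalk.isChain_src_dst {F : V → V → ℕ → ℕ → ℕ∞} {W : List (V × V × ℕ × ℕ)}
    (hW : IsValidWalk F W) : W.IsChain fun q q' => qdst q = qsrc q' :=
  List.isChain_iff_getElem.mpr hW.1

theorem IsValidWalk.pairwise_arr_le_dep {F : V → V → ℕ → ℕ → ℕ∞} {W : List (V × V × ℕ × ℕ)}
    (hW : IsValidWalk F W) : W.Pairwise fun q q' => qarr q ≤ qdep q' := by
  -- the conjunct `qdep q < qarr q` is what makes `R` transitive
  let R (q q' : V × V × ℕ × ℕ) : Prop := qdep q < qarr q ∧ qarr q ≤ qdep q'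
  have : Trans R R R := ⟨fun h₁ h₂ => ⟨h₁.1, by omega⟩⟩
  have hR : W.IsChain R :=
    List.isChain_iff_getElem.mpr fun i hi => ⟨(hW.2.1 _ (List.getElem_mem _)).1, hW.2.2 i hi⟩
  exact hR.pairwise.imp And.right

theorem traversalSeq_of_pairwise {F : V → V → ℕ → ℕ → ℕ∞} {a b : V} {L : List (V × V × ℕ × ℕ)}
    (htrav : ∀ q ∈ L, Traverses a b q) (hfin : ∀ q ∈ L, F (qsrc q) (qdst q) (qdep q) (qarr q) < ⊤)
    (hL : L.Pairwise fun q q' => qarr q ≤ qdep q') :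
    TraversalSeq F a b (L.map fun q => (qdep q, qarr q)) := by
  have htimes : (L.map fun q => (qdep q, qarr q)).Pairwise fun p p' => p.2 ≤ p'.1 :=
    List.pairwise_map.mpr hL
  refine ⟨?_, htimes.isChain.getElem⟩
  simp only [List.mem_map, forall_exists_index, and_imp, forall_apply_eq_imp_iff₂]
  intro q hq
  rcases htrav q hq with ⟨hs, hd⟩ | ⟨hs, hd⟩
  · exact (min_le_left _ _).trans_lt (hs ▸ hd ▸ hfin q hq)
  · exact (min_le_right _ _).trans_lt (hs ▸ hd ▸ hfin q hq)

theorem IsValidWalk.traversalSeq_filter_traverses [DecidableEq V] {F : V → V → ℕ → ℕ → ℕ∞}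
    {W : List (V × V × ℕ × ℕ)} (hW : IsValidWalk F W) (a b : V) :
    TraversalSeq F a b
      ((W.filter fun q => decide (Traverses a b q)).map fun q => (qdep q, qarr q)) :=
  traversalSeq_of_pairwise (fun _ hq => of_decide_eq_true (List.mem_filter.mp hq).2)
    (fun q hq => (hW.2.1 q (List.mem_of_mem_filter hq)).2)
    (hW.pairwise_arr_le_dep.sublist List.filter_sublist)

theorem even_countP_ne_iff_of_isChain (c : V → Bool) (q : V × V × ℕ × ℕ)
    (W : List (V × V × ℕ × ℕ)) (hchain : (q :: W).IsChain fun q q' => qdst q = qsrc q') :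
    c (qsrc q) = c (qdst ((q :: W).getLast (List.cons_ne_nil q W))) ↔
      Even ((q :: W).countP fun q => c (qsrc q) != c (qdst q)) := by
  induction W generalizing q with
  | nil => cases hs : c (qsrc q) <;> cases hd : c (qdst q) <;> simp [hs, hd]
  | cons q' W ih =>
    obtain ⟨hqq', hW⟩ := List.isChain_cons_cons.mp hchain
    have ih' := ih q' hW
    rw [← hqq'] at ih'
    rw [List.getLast_cons_cons, List.countP_cons, Nat.even_add, ← ih']
    cases c (qsrc q) <;> cases c (qdst q) <;> simp

theorem SimpleGraph.IsAcyclic.reachable_deleteEdges_iff_iff_ne {G : SimpleGraph V}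
    (hG : G.IsAcyclic) {a b u v : V} (hab : G.Adj a b) (huv : G.Adj u v) :
    ((G.deleteEdges {s(a, b)}).Reachable u a ↔ (G.deleteEdges {s(a, b)}).Reachable v a) ↔
      s(u, v) ≠ s(a, b) := by
  constructor
  · have hbridge : ¬ (G.deleteEdges {s(a, b)}).Reachable a b :=
      SimpleGraph.isBridge_iff.mp (SimpleGraph.isAcyclic_iff_forall_isBridge.mp hG hab)
    rintro h heq
    rcases Sym2.eq_iff.mp heq with ⟨rfl, rfl⟩ | ⟨rfl, rfl⟩
    · exact hbridge (h.mp .rfl).symm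
    · exact hbridge (h.mpr .rfl).symm
  · intro hne
    have hD : (G.deleteEdges {s(a, b)}).Adj u v := by simp [huv, hne]
    exact ⟨hD.symm.reachable.trans, hD.reachable.trans⟩

theorem even_length_filter_traverses_of_isAcyclic [DecidableEq V] {G : SimpleGraph V}
    (hG : G.IsAcyclic) {a b s : V} (hab : G.Adj a b) {W : List (V × V × ℕ × ℕ)}
    (hchain : W.IsChain fun q q' => qdst q = qsrc q')
    (hstep : ∀ q ∈ W, qsrc q ≠ qdst q → G.Adj (qsrc q) (qdst q)) (hfrom : WalkFrom W s s) :
    Even (W.filter fun q => decide (Traverses a b q)).length := by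
  classical
  let c : V → Bool := fun v => decide ((G.deleteEdges {s(a, b)}).Reachable v a)
  have hflip : ∀ q ∈ W, c (qsrc q) ≠ c (qdst q) ↔ Traverses a b q := by
    intro q hq
    rw [traverses_iff, Ne, decide_eq_decide]
    by_cases hsd : qsrc q = qdst q
    · simp only [hsd, iff_self, not_true_eq_false, false_iff]
      intro h
      rcases Sym2.eq_iff.mp h with ⟨rfl, rfl⟩ | ⟨rfl, rfl⟩ <;> exact hab.ne rfl
    · rw [hG.reachable_deleteEdges_iff_iff_ne hab (hstep q hq hsd), not_not]
  obtain ⟨q, ql, hh, hl, rfl, hlast⟩ := hfrom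
  obtain ⟨W, rfl⟩ := List.head?_eq_some_iff.mp hh
  rw [List.getLast?_eq_some_getLast (List.cons_ne_nil q W), Option.some_inj] at hl
  subst hl
  rw [← List.countP_eq_length_filter, ← List.countP_congr fun q hq =>
    bne_iff_ne.trans ((hflip q hq).trans decide_eq_true_iff.symm)]
  exact (even_countP_ne_iff_of_isChain c q W hchain).mp (congrArg c hlast.symm)
end

theorem tree_closed_walk_edge_uses_le_two_general {V : Type*} [DecidableEq V]
    (G : SimpleGraph V) (hG : G.IsTree) (F : V → V → ℕ → ℕ → ℕ∞)
    (hGF : ∀ u v t₁ t₂, F u v t₁ t₂ < ⊤ → u ≠ v → G.Adj u v)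
    (hmt : ∀ a b : V, G.Adj a b → ∀ s, TraversalSeq F a b s → s.length ≤ 3)
    (s : V) (W : List (V × V × ℕ × ℕ)) (hW : IsValidWalk F W) (hfrom : WalkFrom W s s) :
    ∀ a b : V, G.Adj a b →
      (W.filter fun q =>
          decide ((qsrc q = a ∧ qdst q = b) ∨ (qsrc q = b ∧ qdst q = a))).length ≤ 2 := by
  intro a b hab
  change (W.filter fun q => decide (Traverses a b q)).length ≤ 2
  have hle : (W.filter fun q => decide (Traverses a b q)).length ≤ 3 := by
    simpa using hmt a b hab _ (hW.traversalSeq_filter_traverses a b)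
  obtain ⟨k, hk⟩ := even_length_filter_traverses_of_isAcyclic hG.isAcyclic hab
    hW.isChain_src_dst (fun q hq => hGF _ _ _ _ (hW.2.1 q hq).2) hfrom
  omega

/-- In a temporal cost graph on a tree in which every edge has maximum traversal number
at most `3`, every valid walk from a vertex `s` back to `s` traverses each edge at most
twice. -/
theorem tree_closed_walk_edge_uses_le_two {V : Type*} [DecidableEq V]
    (G : SimpleGraph V) (hG : G.IsTree) (F : V → V → ℕ → ℕ → ℕ∞)
    (hF1 : ∀ u v t₁ t₂, t₂ ≤ t₁ → F u v t₁ t₂ = ⊤)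
    (hF2 : ∀ v t₁ t₂, t₁ < t₂ → F v v t₁ t₂ = 0)
    (hF3 : ∀ u v t₁ t₂, u ≠ v → 0 < F u v t₁ t₂)
    (hGF : ∀ u v t₁ t₂, F u v t₁ t₂ < ⊤ → u ≠ v → G.Adj u v)
    (hmt : ∀ a b : V, G.Adj a b → ∀ s, TraversalSeq F a b s → s.length ≤ 3)
    (s : V) (W : List (V × V × ℕ × ℕ)) (hW : IsValidWalk F W) (hfrom : WalkFrom W s s) :
    ∀ a b : V, G.Adj a b →
      (W.filter fun q =>
          decide ((qsrc q = a ∧ qdst q = b) ∨ (qsrc q = b ∧ qdst q = a))).length ≤ 2 :=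
  tree_closed_walk_edge_uses_le_two_general G hG F hGF hmt s W hW hfrom
end

section
/- Let (G,F) be a temporal cost graph whose underlying graph G is a tree, let v_s and v_t be vertices of G, let P be the unique path in G from v_s to v_t, and let E' be a set of edges of G such that every edge in E(G) ∖ E' has maximum traversal number at most 3 in (G,F). Then for every valid walk W on (G,F) from v_s to v_t: every edge not in E' and not on P is traversed by W at most twice, and every edge on P that is not in E' is traversed by W exactly once or exactly three times. -/
/-!
Deleting an edge `ab` of a tree splits it into two sides, since `ab` is a bridge. Each step of a
walk either stays on one side or crosses `ab`, so a walk crosses `ab` an even number of times iff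
its endpoints lie on the same side. The path `P` crosses `ab` once or never, according to whether
`ab ∈ P`, and the valid walk `W` has the same endpoints, hence the same parity. The traversals of
`ab` by `W`, in temporal order, form a traversal sequence of `ab`, so there are at most three.
-/

namespace SimpleGraph

variable {V : Type*} {G : SimpleGraph V}

theorem IsBridge.reachable_iff_reachable_iff_ne {a b x y : V} (h : G.IsBridge s(a, b))
    (hxy : x = y ∨ G.Adj x y) :
    ((G.deleteEdges {s(a, b)}).Reachable a x ↔ (G.deleteEdges {s(a, b)}).Reachable a y) ↔
      s(x, y) ≠ s(a, b) := by
  have hab : ¬ (G.deleteEdges {s(a, b)}).Reachable a b := isBridge_iff.mp h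
  by_cases he : s(x, y) = s(a, b)
  · rcases Sym2.eq_iff.mp he with ⟨rfl, rfl⟩ | ⟨rfl, rfl⟩ <;> simpa using hab
  · rcases hxy with rfl | hxy
    · simpa using he
    · have hadj : (G.deleteEdges {s(a, b)}).Adj x y := by simpa [he] using hxy
      simpa [he] using ⟨fun h => h.trans hadj.reachable, fun h => h.trans hadj.symm.reachable⟩

theorem Walk.even_count_edges_iff [DecidableEq V] {R : V → Prop} {e : Sym2 V}
    (hR : ∀ x y, G.Adj x y → ((R x ↔ R y) ↔ s(x, y) ≠ e)) :
    ∀ {u v : V} (w : G.Walk u v), Even (w.edges.count e) ↔ (R u ↔ R v)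
  | _, _, .nil => by simp
  | u, _, .cons (v := m) h w => by
    have ih := even_count_edges_iff hR w
    have hstep := hR u m h
    by_cases he : s(u, m) = e
    · simp only [edges_cons, List.count_cons_self, he, Nat.even_add_one, ih, ne_eq,
        not_true_eq_false, iff_false] at hstep ⊢
      tauto
    · simp only [edges_cons, List.count_cons_of_ne he, ih, ne_eq, he, not_false_eq_true,
        iff_true] at hstep ⊢
      tauto

end SimpleGraph

section TemporalWalk

variable {V : Type*}

theorem even_length_filter_iff_of_isChain [DecidableEq V] {R : V → Prop} {e : Sym2 V}
    {W : List (V × V × ℕ × ℕ)} (hW : W.IsChain fun q q' => qdst q = qsrc q')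
    (hR : ∀ q ∈ W, (R (qsrc q) ↔ R (qdst q)) ↔ s(qsrc q, qdst q) ≠ e)
    {q₁ qₗ : V × V × ℕ × ℕ} (h₁ : W.head? = some q₁) (hₗ : W.getLast? = some qₗ) :
    Even (W.filter fun q => s(qsrc q, qdst q) = e).length ↔
      (R (qsrc q₁) ↔ R (qdst qₗ)) := by
  induction hW generalizing q₁ with
  | nil => simp at h₁
  | singleton q =>
    obtain rfl : q = q₁ := by simpa using h₁
    obtain rfl : q = qₗ := by simpa using hₗ
    have hq := hR q (by simp)
    by_cases he : s(qsrc q, qdst q) = e <;> simp_all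
  | @cons_cons q q' l hqq' _ ih =>
    obtain rfl : q = q₁ := by simpa using h₁
    have hq := hR q (by simp)
    have ih := ih (fun x hx => hR x (List.mem_cons_of_mem _ hx)) rfl
      (by simpa [List.getLast?_cons_cons] using hₗ)
    rw [← hqq'] at ih
    by_cases he : s(qsrc q, qdst q) = e
    · rw [List.filter_cons_of_pos (by simpa using he), List.length_cons, Nat.even_add_one, ih]
      have := hq.not.mpr (not_not.mpr he)
      tauto
    · rw [List.filter_cons_of_neg (by simpa using he), ih]
      have := hq.mpr he
      tauto

variable {F : V → V → ℕ → ℕ → ℕ∞} {W : List (V × V × ℕ × ℕ)}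

theorem IsValidWalk.isChain_dst_eq_src (hW : IsValidWalk F W) :
    W.IsChain fun q q' => qdst q = qsrc q' :=
  List.isChain_iff_getElem.mpr hW.1

theorem IsValidWalk.isChain_filter_arr_le_dep (hW : IsValidWalk F W)
    (c : V × V × ℕ × ℕ → Bool) :
    (W.filter c).IsChain fun q q' => qarr q ≤ qdep q' := by
  -- Recording `qdep q' < qarr q'` alongside each link makes the relation transitive.
  let r : V × V × ℕ × ℕ → V × V × ℕ × ℕ → Prop := fun q q' =>
    qarr q ≤ qdep q' ∧ qdep q' < qarr q'
  have : Trans r r r := ⟨fun h h' => ⟨h.1.trans (h.2.le.trans h'.1), h'.2⟩⟩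
  have hr : W.IsChain r := List.isChain_iff_getElem.mpr fun i hi =>
    ⟨hW.2.2 i hi, (hW.2.1 _ (List.getElem_mem hi)).1⟩
  exact (hr.sublist List.filter_sublist).imp fun _ _ h => h.1

theorem IsValidWalk.traversalSeq_filter [DecidableEq V] (hW : IsValidWalk F W) (a b : V) :
    TraversalSeq F a b
      ((W.filter fun q => s(qsrc q, qdst q) = s(a, b)).map fun q => (qdep q, qarr q)) := by
  refine ⟨?_, (List.isChain_iff_getElem (R := fun x y : ℕ × ℕ => x.2 ≤ y.1)).mp ?_⟩
  · simp only [List.mem_map, List.mem_filter, decide_eq_true_eq, Sym2.eq_iff]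
    rintro _ ⟨q, ⟨hq, ⟨hqa, hqb⟩ | ⟨hqb, hqa⟩⟩, rfl⟩
    · exact min_lt_of_left_lt (hqa ▸ hqb ▸ (hW.2.1 q hq).2)
    · exact min_lt_of_right_lt (hqa ▸ hqb ▸ (hW.2.1 q hq).2)
  · exact List.isChain_map_of_isChain (fun q => (qdep q, qarr q)) (fun _ _ h => h)
      (hW.isChain_filter_arr_le_dep _)

theorem IsValidWalk.src_eq_or_adj {G : SimpleGraph V}
    (hGF : ∀ u v t₁ t₂, F u v t₁ t₂ < ⊤ → u ≠ v → G.Adj u v) (hW : IsValidWalk F W) :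
    ∀ q ∈ W, qsrc q = qdst q ∨ G.Adj (qsrc q) (qdst q) := fun q hq =>
  or_iff_not_imp_left.mpr (hGF _ _ _ _ (hW.2.1 q hq).2)

end TemporalWalk

theorem tree_walk_edge_uses_off_subforest_general {V : Type*} [DecidableEq V]
    (G : SimpleGraph V) (hG : G.IsTree) (F : V → V → ℕ → ℕ → ℕ∞)
    (hGF : ∀ u v t₁ t₂, F u v t₁ t₂ < ⊤ → u ≠ v → G.Adj u v)
    (vs vt : V) (p : G.Walk vs vt) (hp : p.IsPath) (E' : Set (Sym2 V))
    (hmt : ∀ a b : V, G.Adj a b → s(a, b) ∉ E' →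
      ∀ s, TraversalSeq F a b s → s.length ≤ 3)
    (W : List (V × V × ℕ × ℕ)) (hW : IsValidWalk F W) (hfrom : WalkFrom W vs vt) :
    ∀ a b : V, G.Adj a b → s(a, b) ∉ E' →
      (s(a, b) ∉ p.edges →
        (W.filter fun q =>
            decide ((qsrc q = a ∧ qdst q = b) ∨ (qsrc q = b ∧ qdst q = a))).length ≤ 2) ∧
      (s(a, b) ∈ p.edges →
        (W.filter fun q =>
            decide ((qsrc q = a ∧ qdst q = b) ∨ (qsrc q = b ∧ qdst q = a))).length = 1 ∨
        (W.filter fun q =>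
            decide ((qsrc q = a ∧ qdst q = b) ∨ (qsrc q = b ∧ qdst q = a))).length = 3) := by
  intro a b hab hE
  simp only [← Sym2.eq_iff]
  obtain ⟨q₁, qₗ, h₁, hₗ, rfl, rfl⟩ := hfrom
  have hbridge := SimpleGraph.isAcyclic_iff_forall_adj_isBridge.mp hG.isAcyclic hab
  have hle : (W.filter fun q => s(qsrc q, qdst q) = s(a, b)).length ≤ 3 := by
    simpa using hmt a b hab hE _ (hW.traversalSeq_filter a b)
  have hside {x y : V} := hbridge.reachable_iff_reachable_iff_ne (x := x) (y := y)
  have hparity : Even (W.filter fun q => s(qsrc q, qdst q) = s(a, b)).length ↔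
      Even (p.edges.count s(a, b)) :=
    (even_length_filter_iff_of_isChain hW.isChain_dst_eq_src
      (fun q hq => hside (hW.src_eq_or_adj hGF q hq)) h₁ hₗ).trans
      (p.even_count_edges_iff fun _ _ hxy => hside (Or.inr hxy)).symm
  refine ⟨fun hp' => ?_, fun hp' => ?_⟩
  · rw [List.count_eq_zero.mpr hp'] at hparity
    obtain ⟨k, hk⟩ := hparity.mpr ⟨0, rfl⟩
    omega
  · rw [List.count_eq_one_of_mem hp.isTrail.edges_nodup hp'] at hparity
    obtain ⟨k, hk⟩ := Nat.not_even_iff_odd.mp (hparity.not.mpr Nat.not_even_one)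
    omega

/-- In a temporal cost graph on a tree, with `P` the unique path from `vs` to `vt` and
`E'` a set of edges such that every edge outside `E'` has maximum traversal number at
most `3`, every valid walk from `vs` to `vt` traverses each edge outside `E'` not on `P`
at most twice, and each edge outside `E'` on `P` exactly once or exactly three times. -/
theorem tree_walk_edge_uses_off_subforest {V : Type*} [DecidableEq V]
    (G : SimpleGraph V) (hG : G.IsTree) (F : V → V → ℕ → ℕ → ℕ∞)
    (hF1 : ∀ u v t₁ t₂, t₂ ≤ t₁ → F u v t₁ t₂ = ⊤)
    (hF2 : ∀ v t₁ t₂, t₁ < t₂ → F v v t₁ t₂ = 0)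
    (hF3 : ∀ u v t₁ t₂, u ≠ v → 0 < F u v t₁ t₂)
    (hGF : ∀ u v t₁ t₂, F u v t₁ t₂ < ⊤ → u ≠ v → G.Adj u v)
    (vs vt : V) (p : G.Walk vs vt) (hp : p.IsPath) (E' : Set (Sym2 V))
    (hmt : ∀ a b : V, G.Adj a b → s(a, b) ∉ E' →
      ∀ s, TraversalSeq F a b s → s.length ≤ 3)
    (W : List (V × V × ℕ × ℕ)) (hW : IsValidWalk F W) (hfrom : WalkFrom W vs vt) :
    ∀ a b : V, G.Adj a b → s(a, b) ∉ E' →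
      (s(a, b) ∉ p.edges →
        (W.filter fun q =>
            decide ((qsrc q = a ∧ qdst q = b) ∨ (qsrc q = b ∧ qdst q = a))).length ≤ 2) ∧
      (s(a, b) ∈ p.edges →
        (W.filter fun q =>
            decide ((qsrc q = a ∧ qdst q = b) ∨ (qsrc q = b ∧ qdst q = a))).length = 1 ∨
        (W.filter fun q =>
            decide ((qsrc q = a ∧ qdst q = b) ∨ (qsrc q = b ∧ qdst q = a))).length = 3) :=
  tree_walk_edge_uses_off_subforest_general G hG F hGF vs vt p hp E' hmt W hW hfrom
end

section
/- Let (G,F) be a temporal cost graph with lifetime bound T, let v_s be a vertex, let c : V → {0,1,…,k} be a colouring with c⁻¹(0) = {v_s}, and let c₀ = 0, c₁, …, c_k be an ordering of the colours (where c₁,…,c_k is a permutation of {1,…,k}). For 0 ≤ i ≤ k let V_i = c⁻¹(c_i). For a set I of colours and vertices u,v and times t₁ < t₂, let F̂_I(u,v,t₁,t₂) be the minimum cost of a valid walk on (G,F) from u to v whose first departure time is exactly t₁, whose last arrival time is exactly t₂, and in which every visited vertex other than possibly v has colour in I (∞ if no such walk exists). For v ∈ V_i and t ∈ {1,…,T},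 let F*_π(v,t) be the minimum cost of a valid walk on (G,F) from v_s to v with all arrival times at most t such that only the colours c₀,c₁,…,c_i appear among its visited vertices, the first appearances of these colours along the walk occur in the order c₀,c₁,…,c_i, and v is the first visited vertex of colour c_i (∞ if no such walk exists); and let F*_π(v_s,t) = 0 for all t. Then for every 1 ≤ i ≤ k, every v ∈ V_i and every t ∈ {1,…,T}: F*_π(v,t) = min { F*_π(v',t₁) + F̂_{{c₀,…,c_{i-1}}}(v',v,t₁,t₂) : v' ∈ V_{i-1} and 1 ≤ t₁ < t₂ ≤ t }. -/
/-- `FhatI F c I u v t₁ t₂` is the minimum cost of a valid walk from `u` to `v` whose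
first departure time is exactly `t₁`, whose last arrival time is exactly `t₂`, and in
which every visited vertex other than possibly `v` has colour in `I` (`∞` if none). -/
noncomputable def FhatI {V : Type*} (F : V → V → ℕ → ℕ → ℕ∞) (c : V → ℕ) (I : Set ℕ)
    (u v : V) (t₁ t₂ : ℕ) : ℕ∞ :=
  sInf {x : ℕ∞ | ∃ W q1 ql, IsValidWalk F W ∧
    W.head? = some q1 ∧ W.getLast? = some ql ∧
    qsrc q1 = u ∧ qdst ql = v ∧ qdep q1 = t₁ ∧ qarr ql = t₂ ∧
    (∀ w ∈ visited W, w ≠ v → c w ∈ I) ∧ walkCost F W = x}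

open scoped Classical in
/-- `Fstar F c π vs i v t` is the minimum cost of a valid walk from `vs` to `v` with all
arrival times at most `t`, in which only the colours `π 0, …, π i` appear among the
visited vertices, all of them appear, their first appearances occur in the order
`π 0, π 1, …, π i`, and `v` is the first visited vertex of colour `π i`; it is `0` when
`v = vs`. -/
noncomputable def Fstar {V : Type*} (F : V → V → ℕ → ℕ → ℕ∞) (c : V → ℕ) (π : ℕ → ℕ)
    (vs : V) (i : ℕ) (v : V) (t : ℕ) : ℕ∞ :=
  if v = vs then 0
  else sInf {x : ℕ∞ | ∃ W, IsValidWalk F W ∧ WalkFrom W vs v ∧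
    (∀ q ∈ W, qarr q ≤ t) ∧
    (∀ w ∈ visited W, ∃ j ≤ i, c w = π j) ∧
    (∀ j ≤ i, ∃ w ∈ visited W, c w = π j) ∧
    (∀ j j' : ℕ, j < j' → j' ≤ i → ∀ l₁ l₂ : List V, visited W = l₁ ++ l₂ →
      (∃ w ∈ l₁, c w = π j') → ∃ w ∈ l₁, c w = π j) ∧
    (∃ l₁ l₂ : List V, visited W = l₁ ++ v :: l₂ ∧ ∀ w ∈ l₁, c w ≠ π i) ∧
    walkCost F W = x}

/-!
Cut a walk `W` realising `F*_π(v, t)` at the first visit of `v`, and inside that prefix at the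
last departure from `v'`, the first visited vertex of colour `π (i-1)`. The part before is a walk
for `F*_π(v', t₁)` and the part after a walk for `F̂(v', v, t₁, t₂)`; conversely two such walks
concatenate to a walk for `F*_π(v, t)`. Departing from `v'` for the last time makes the first
quadruple of the second part a genuine move, so its departure time `t₁` is at least `1`.
-/

namespace List

variable {α : Type*}

lemma exists_split_first (p : α → Prop) {l : List α} (h : ∃ x ∈ l, p x) :
    ∃ l₁ x l₂, l = l₁ ++ x :: l₂ ∧ p x ∧ ∀ y ∈ l₁, ¬ p y := by
  induction l with
  | nil => simp at h
  | cons a l ih =>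
    by_cases ha : p a
    · exact ⟨[], a, l, rfl, ha, by simp⟩
    · obtain ⟨l₁, x, l₂, rfl, hx, hl₁⟩ := ih (by simpa [ha] using h)
      exact ⟨a :: l₁, x, l₂, rfl, hx, by simpa [ha] using hl₁⟩

lemma exists_split_last (p : α → Prop) {l : List α} (h : ∃ x ∈ l, p x) :
    ∃ l₁ x l₂, l = l₁ ++ x :: l₂ ∧ p x ∧ ∀ y ∈ l₂, ¬ p y := by
  obtain ⟨l₁, x, l₂, hl, hx, hl₁⟩ := exists_split_first p (l := l.reverse) (by simpa using h)
  refine ⟨l₂.reverse, x, l₁.reverse, ?_, hx, by simpa using hl₁⟩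
  simpa using congrArg reverse hl

lemma exists_append_singleton_eq_append_cons {p p' m n : List α} {x : α}
    (h : p ++ x :: p' = m ++ x :: n) (hx : x ∉ p) : ∃ p'', m ++ [x] = p ++ x :: p'' := by
  rcases append_eq_append_iff.mp h with ⟨as, rfl, has⟩ | ⟨bs, rfl, hbs⟩
  · cases as with
    | nil => exact ⟨[], by simp⟩
    | cons a as =>
      obtain ⟨rfl, -⟩ := cons_eq_cons.mp has
      exact ⟨as ++ [x], by simp⟩
  · cases bs with
    | nil => exact ⟨[], by simp⟩
    | cons b bs =>
      obtain ⟨rfl, -⟩ := cons_eq_cons.mp hbs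
      simp at hx

end List

section Walk

variable {V : Type*} {F : V → V → ℕ → ℕ → ℕ∞}

def Precedes (q q' : V × V × ℕ × ℕ) : Prop := qdst q = qsrc q' ∧ qarr q ≤ qdep q'

lemma isValidWalk_iff {W : List (V × V × ℕ × ℕ)} :
    IsValidWalk F W ↔ W.IsChain Precedes ∧
      ∀ q ∈ W, qdep q < qarr q ∧ F (qsrc q) (qdst q) (qdep q) (qarr q) < ⊤ := by
  rw [List.isChain_iff_getElem]
  exact ⟨fun ⟨hsrc, hq, harr⟩ => ⟨fun i hi => ⟨hsrc i hi, harr i hi⟩, hq⟩,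
    fun ⟨h, hq⟩ => ⟨fun i hi => (h i hi).1, hq, fun i hi => (h i hi).2⟩⟩

lemma isValidWalk_append {W₁ W₂ : List (V × V × ℕ × ℕ)} :
    IsValidWalk F (W₁ ++ W₂) ↔ IsValidWalk F W₁ ∧ IsValidWalk F W₂ ∧
      ∀ a ∈ W₁.getLast?, ∀ b ∈ W₂.head?, Precedes a b := by
  simp only [isValidWalk_iff, List.isChain_append, List.mem_append]
  grind

lemma IsValidWalk.qarr_le {W : List (V × V × ℕ × ℕ)} (hW : IsValidWalk F W)
    {q ql : V × V × ℕ × ℕ} (hq : q ∈ W) (hl : W.getLast? = some ql) : qarr q ≤ qarr ql := by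
  induction W generalizing q with
  | nil => simp at hq
  | cons a W ih =>
    rw [← List.singleton_append, isValidWalk_append] at hW
    obtain ⟨ha, hW, hjoin⟩ := hW
    cases W with
    | nil => simp_all
    | cons b W =>
      have hlast : (b :: W).getLast? = some ql := by simpa using hl
      rcases List.mem_cons.mp hq with rfl | hq
      · have hab : qarr q ≤ qdep b := (hjoin q (by simp) b (by simp)).2
        have hb : qdep b < qarr b := ((isValidWalk_iff.mp hW).2 b (by simp)).1
        exact (hab.trans hb.le).trans (ih hW (by simp) hlast)
      · exact ih hW hq hlast

lemma IsValidWalk.qdep_lt {W : List (V × V × ℕ × ℕ)} (hW : IsValidWalk F W)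
    {q ql : V × V × ℕ × ℕ} (hq : q ∈ W) (hl : W.getLast? = some ql) : qdep q < qarr ql :=
  ((isValidWalk_iff.mp hW).2 q hq).1.trans_le (hW.qarr_le hq hl)

lemma walkCost_append (W₁ W₂ : List (V × V × ℕ × ℕ)) :
    walkCost F (W₁ ++ W₂) = walkCost F W₁ + walkCost F W₂ := by
  simp [walkCost]

lemma visited_of_head? {W : List (V × V × ℕ × ℕ)} {q : V × V × ℕ × ℕ}
    (h : W.head? = some q) : visited W = qsrc q :: W.map qdst := by
  cases W with
  | nil => simp at h
  | cons a W => simp_all [visited]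

lemma visited_append {W₁ : List (V × V × ℕ × ℕ)} (h : W₁ ≠ []) (W₂ : List (V × V × ℕ × ℕ)) :
    visited (W₁ ++ W₂) = visited W₁ ++ W₂.map qdst := by
  cases W₁ with
  | nil => contradiction
  | cons a W₁ => simp [visited]

lemma visited_take (W : List (V × V × ℕ × ℕ)) {n : ℕ} (hn : n ≠ 0) :
    visited (W.take n) = (visited W).take (n + 1) := by
  obtain ⟨n, rfl⟩ := Nat.exists_eq_succ_of_ne_zero hn
  cases W with
  | nil => simp [visited]
  | cons a W => simp [visited, List.map_take]

lemma visited_eq_map_qsrc {W : List (V × V × ℕ × ℕ)} (hW : W.IsChain Precedes)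
    {ql : V × V × ℕ × ℕ} (hl : W.getLast? = some ql) : visited W = W.map qsrc ++ [qdst ql] := by
  induction W with
  | nil => simp at hl
  | cons a W ih =>
    cases W with
    | nil => simp_all [visited]
    | cons b W =>
      rw [List.isChain_cons_cons] at hW
      have := ih hW.2 (by simpa using hl)
      simp only [visited, List.map_cons] at this ⊢
      rw [hW.1.1, this]
      rfl

lemma qsrc_ne_qdst_of_last_departure {q ql : V × V × ℕ × ℕ} {B : List (V × V × ℕ × ℕ)}
    (hB : (q :: B).IsChain Precedes) (hl : (q :: B).getLast? = some ql)
    (hql : qdst ql ≠ qsrc q) (hdep : ∀ b ∈ B, qsrc b ≠ qsrc q) : qsrc q ≠ qdst q := by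
  cases B with
  | nil =>
    obtain rfl : q = ql := by simpa using hl
    exact hql.symm
  | cons b B =>
    rw [List.isChain_cons_cons] at hB
    exact fun h => hdep b (by simp) (hB.1.1 ▸ h).symm

lemma exists_append_of_visited_eq {W : List (V × V × ℕ × ℕ)} (hW : W.IsChain Precedes)
    {l₁ l₂ : List V} {v : V} (h : visited W = l₁ ++ v :: l₂) (hl₁ : l₁ ≠ []) :
    ∃ W' W'' ql, W = W' ++ W'' ∧ W'.getLast? = some ql ∧ qdst ql = v ∧ W'.map qsrc = l₁ := by
  have hvis : visited (W.take l₁.length) = l₁ ++ [v] := by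
    rw [visited_take W (by simpa using hl₁), h, List.take_append]
    simp
  obtain ⟨ql, hql⟩ : ∃ ql, (W.take l₁.length).getLast? = some ql := by
    refine ⟨_, List.getLast?_eq_some_getLast fun h0 => ?_⟩
    simp [h0, visited] at hvis
  have hchain : (W.take l₁.length).IsChain Precedes := hW.take _
  rw [visited_eq_map_qsrc hchain hql] at hvis
  obtain ⟨hmap, hdst⟩ := List.append_inj' hvis rfl
  exact ⟨_, _, ql, (List.take_append_drop _ W).symm, hql, by simpa using hdst, hmap⟩

end Walk

lemma Set.InjOn.apply_ne_apply_succ {π : ℕ → ℕ} {j j' : ℕ} (hinj : Set.InjOn π (Set.Iic (j + 1)))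
    (hj' : j' ≤ j) : π j' ≠ π (j + 1) := fun h =>
  absurd (hinj (Set.mem_Iic.mpr (by omega)) (Set.mem_Iic.mpr le_rfl) h) (by omega)

lemma injOn_Iic_of_bijOn_Icc {π : ℕ → ℕ} {k : ℕ} (hπ0 : π 0 = 0)
    (hπ : Set.BijOn π (Set.Icc 1 k) (Set.Icc 1 k)) : Set.InjOn π (Set.Iic k) := by
  have hpos : ∀ x ∈ Set.Iic k, x ≠ 0 → π x ≠ 0 := fun x hx hx0 =>
    Nat.one_le_iff_ne_zero.mp (hπ.mapsTo ⟨Nat.one_le_iff_ne_zero.mpr hx0, hx⟩).1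
  intro a ha b hb hab
  rcases eq_or_ne a 0 with rfl | ha0 <;> rcases eq_or_ne b 0 with rfl | hb0
  · rfl
  · exact absurd (hab.symm.trans hπ0) (hpos b hb hb0)
  · exact absurd (hab.trans hπ0) (hpos a ha ha0)
  · exact hπ.injOn ⟨Nat.one_le_iff_ne_zero.mpr ha0, ha⟩ ⟨Nat.one_le_iff_ne_zero.mpr hb0, hb⟩ hab

section Colour

variable {V : Type*} (c : V → ℕ) (π : ℕ → ℕ)

def ColourOrdered (i : ℕ) (v : V) (L : List V) : Prop :=
  (∀ w ∈ L, ∃ j ≤ i, c w = π j) ∧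
  (∀ j ≤ i, ∃ w ∈ L, c w = π j) ∧
  (∀ j j' : ℕ, j < j' → j' ≤ i → ∀ l₁ l₂ : List V, L = l₁ ++ l₂ →
    (∃ w ∈ l₁, c w = π j') → ∃ w ∈ l₁, c w = π j) ∧
  (∃ l₁ l₂ : List V, L = l₁ ++ v :: l₂ ∧ ∀ w ∈ l₁, c w ≠ π i)

variable {c π}

lemma colourOrdered_singleton {w : V} (hw : c w = π 0) : ColourOrdered c π 0 w [w] :=
  ⟨by simpa using hw, by simpa using hw, by omega, [], [], rfl, by simp⟩

lemma ColourOrdered.append {j : ℕ} {v v' : V} {L₁ L₂ : List V}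
    (hinj : Set.InjOn π (Set.Iic (j + 1))) (h₁ : ColourOrdered c π j v' L₁)
    (h₂ : ∀ w ∈ L₂, w ≠ v → ∃ j' ≤ j, c w = π j') (hv : v ∈ L₂) (hcv : c v = π (j + 1)) :
    ColourOrdered c π (j + 1) v (L₁ ++ L₂) := by
  obtain ⟨hcol, hall, hord, -⟩ := h₁
  have hcol₂ : ∀ w ∈ L₂, ∃ j' ≤ j + 1, c w = π j' := fun w hw => by
    by_cases hwv : w = v
    · exact ⟨j + 1, le_rfl, hwv ▸ hcv⟩
    · obtain ⟨j', hj', h⟩ := h₂ w hw hwv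
      exact ⟨j', by omega, h⟩
  refine ⟨?_, ?_, ?_, ?_⟩
  · intro w hw
    rcases List.mem_append.mp hw with hw | hw
    · obtain ⟨j', hj', h⟩ := hcol w hw
      exact ⟨j', by omega, h⟩
    · exact hcol₂ w hw
  · intro j' hj'
    rcases Nat.lt_or_eq_of_le hj' with hj' | rfl
    · obtain ⟨w, hw, h⟩ := hall j' (by omega)
      exact ⟨w, List.mem_append_left _ hw, h⟩
    · exact ⟨v, List.mem_append_right _ hv, hcv⟩
  · intro j₁ j₂ hj₁₂ hj₂ l₁ l₂ hl ⟨w, hw, hcw⟩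
    rcases List.append_eq_append_iff.mp hl with ⟨b, rfl, -⟩ | ⟨a, rfl, -⟩
    · obtain ⟨w', hw', h⟩ := hall j₁ (by omega)
      exact ⟨w', List.mem_append_left b hw', h⟩
    · obtain ⟨j', hj', h⟩ := hcol w (List.mem_append_left a hw)
      have hj₂j : j₂ ≤ j := by
        by_contra hj₂j
        exact hinj.apply_ne_apply_succ hj' (by rw [← h, hcw, show j₂ = j + 1 by omega])
      exact hord j₁ j₂ hj₁₂ hj₂j l₁ a rfl ⟨w, hw, hcw⟩
  · obtain ⟨m, _, m', rfl, rfl, hm⟩ := List.exists_split_first (· = v) ⟨v, hv, rfl⟩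
    refine ⟨L₁ ++ m, m', by simp, fun w hw hcw => ?_⟩
    obtain ⟨j', hj', h⟩ : ∃ j' ≤ j, c w = π j' := by
      rcases List.mem_append.mp hw with hw | hw
      · exact hcol w hw
      · exact h₂ w (by simp [hw]) (hm w hw)
    exact hinj.apply_ne_apply_succ hj' (h ▸ hcw)

lemma ColourOrdered.of_isPrefix {j : ℕ} {v v' : V} {L K : List V}
    (hL : ColourOrdered c π (j + 1) v L) (hK : K <+: L) (hKc : ∀ w ∈ K, c w ≠ π (j + 1))
    (hv' : c v' = π j) (hfirst : ∃ p p', K = p ++ v' :: p' ∧ ∀ w ∈ p, c w ≠ π j) :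
    ColourOrdered c π j v' K := by
  obtain ⟨hcol, -, hord, -⟩ := hL
  obtain ⟨K', rfl⟩ := hK
  have hv'K : v' ∈ K := by obtain ⟨p, p', rfl, -⟩ := hfirst; simp
  refine ⟨fun w hw => ?_, fun j' hj' => ?_, ?_, hfirst⟩
  · obtain ⟨j', hj', h⟩ := hcol w (List.mem_append_left _ hw)
    refine ⟨j', ?_, h⟩
    by_contra hj'
    exact hKc w hw (by rw [h, show j' = j + 1 by omega])
  · rcases Nat.lt_or_eq_of_le hj' with hj' | rfl
    · exact hord j' j hj' (by omega) K K' rfl ⟨v', hv'K, hv'⟩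
    · exact ⟨v', hv'K, hv'⟩
  · intro j₁ j₂ hj₁₂ hj₂ l₁ l₂ hl
    exact hord j₁ j₂ hj₁₂ (by omega) l₁ (l₂ ++ K') (by simp [hl])

lemma ColourOrdered.exists_cut {j : ℕ} {v : V} {l₁ l₂ : List V}
    (hL : ColourOrdered c π (j + 1) v (l₁ ++ v :: l₂)) (hl₁ : ∀ w ∈ l₁, c w ≠ π (j + 1))
    (hinj : Set.InjOn π (Set.Iic (j + 1))) (hv : c v = π (j + 1)) :
    ∃ v' ∈ l₁, c v' = π j ∧ ∀ m n, l₁ = m ++ v' :: n → ColourOrdered c π j v' (m ++ [v']) := by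
  obtain ⟨w, hw, hcw⟩ := hL.2.2.1 j (j + 1) (by omega) le_rfl (l₁ ++ [v]) l₂ (by simp)
    ⟨v, by simp, hv⟩
  have hw : w ∈ l₁ := by
    rcases List.mem_append.mp hw with hw | hw
    · exact hw
    · obtain rfl := List.mem_singleton.mp hw
      exact absurd (hcw.symm.trans hv) (hinj.apply_ne_apply_succ le_rfl)
  obtain ⟨p, v', p', hp, hv', hpc⟩ := List.exists_split_first (fun w => c w = π j) ⟨w, hw, hcw⟩
  refine ⟨v', by simp [hp], hv', fun m n hmn => ?_⟩
  have hprefix : m ++ [v'] <+: l₁ := ⟨n, by simp [hmn]⟩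
  refine hL.of_isPrefix (hprefix.trans (List.prefix_append _ _))
    (fun w hw => hl₁ w (hprefix.subset hw)) hv' ?_
  obtain ⟨p'', hp''⟩ := List.exists_append_singleton_eq_append_cons (hp.symm.trans hmn)
    fun h => hpc _ h hv'
  exact ⟨p, p'', hp'', hpc⟩

end Colour

section Costs

variable {V : Type*} (F : V → V → ℕ → ℕ → ℕ∞) (c : V → ℕ) (π : ℕ → ℕ) (vs : V)

def IsFstarWalk (i : ℕ) (v : V) (t : ℕ) (W : List (V × V × ℕ × ℕ)) : Prop :=
  IsValidWalk F W ∧ WalkFrom W vs v ∧ (∀ q ∈ W, qarr q ≤ t) ∧ ColourOrdered c π i v (visited W)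

def IsFhatWalk (I : Set ℕ) (u v : V) (t₁ t₂ : ℕ) (W : List (V × V × ℕ × ℕ)) : Prop :=
  IsValidWalk F W ∧ ∃ q1 ql, W.head? = some q1 ∧ W.getLast? = some ql ∧
    qsrc q1 = u ∧ qdst ql = v ∧ qdep q1 = t₁ ∧ qarr ql = t₂ ∧
    ∀ w ∈ visited W, w ≠ v → c w ∈ I

variable {F c π vs}

lemma Fstar_self (i t : ℕ) : Fstar F c π vs i vs t = 0 := by
  simp [Fstar]

lemma Fstar_of_ne {i t : ℕ} {v : V} (hv : v ≠ vs) :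
    Fstar F c π vs i v t = sInf (walkCost F '' {W | IsFstarWalk F c π vs i v t W}) := by
  simp only [Fstar, if_neg hv, IsFstarWalk, ColourOrdered, Set.image, Set.mem_ofPred_eq, and_assoc]

lemma FhatI_eq (I : Set ℕ) (u v : V) (t₁ t₂ : ℕ) :
    FhatI F c I u v t₁ t₂ = sInf (walkCost F '' {W | IsFhatWalk F c I u v t₁ t₂ W}) := by
  simp only [FhatI, IsFhatWalk, Set.image, Set.mem_ofPred_eq]
  congr 1
  ext x
  constructor
  · rintro ⟨W, q1, ql, hW, h⟩
    exact ⟨W, ⟨hW, q1, ql, by tauto⟩, by tauto⟩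
  · rintro ⟨W, ⟨hW, q1, ql, h⟩, rfl⟩
    exact ⟨W, q1, ql, hW, by tauto⟩

end Costs

lemma ENat.le_sInf_add_sInf {a : ℕ∞} {S T : Set ℕ∞} (h : ∀ x ∈ S, ∀ y ∈ T, a ≤ x + y) :
    a ≤ sInf S + sInf T := by
  rcases S.eq_empty_or_nonempty with rfl | hS
  · simp
  rcases T.eq_empty_or_nonempty with rfl | hT
  · simp
  exact h _ (csInf_mem hS) _ (csInf_mem hT)

section Recurrence

variable {V : Type*} {F : V → V → ℕ → ℕ → ℕ∞} {c : V → ℕ} {π : ℕ → ℕ} {vs : V}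

lemma IsFhatWalk.colourOrdered_append {j t₁ t₂ : ℕ} {v v' : V} {L : List V}
    {W : List (V × V × ℕ × ℕ)} (hW : IsFhatWalk F c {y | ∃ j' ≤ j, y = π j'} v' v t₁ t₂ W)
    (hL : ColourOrdered c π j v' L) (hinj : Set.InjOn π (Set.Iic (j + 1)))
    (hv : c v = π (j + 1)) : ColourOrdered c π (j + 1) v (L ++ W.map qdst) := by
  obtain ⟨-, q1, ql, hq1, hql, -, hdst, -, -, hcol⟩ := hW
  refine hL.append hinj (fun w hw hwv => ?_) ?_ hv
  · exact hcol w (by rw [visited_of_head? hq1]; exact List.mem_cons_of_mem _ hw) hwv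
  · exact List.mem_map.mpr ⟨ql, List.mem_of_getLast? hql, hdst⟩

lemma IsFhatWalk.qarr_le {I : Set ℕ} {u v : V} {t₁ t₂ : ℕ} {W : List (V × V × ℕ × ℕ)}
    (hW : IsFhatWalk F c I u v t₁ t₂ W) : ∀ q ∈ W, qarr q ≤ t₂ := by
  obtain ⟨hW, q1, ql, -, hql, -, -, -, rfl, -⟩ := hW
  exact fun q hq => hW.qarr_le hq hql

lemma IsFstarWalk.append {j t₁ t₂ t : ℕ} {v v' : V} {W₁ W₂ : List (V × V × ℕ × ℕ)}
    (hW₁ : IsFstarWalk F c π vs j v' t₁ W₁)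
    (hW₂ : IsFhatWalk F c {y | ∃ j' ≤ j, y = π j'} v' v t₁ t₂ W₂)
    (hinj : Set.InjOn π (Set.Iic (j + 1))) (hv : c v = π (j + 1)) (ht : t₂ ≤ t) :
    IsFstarWalk F c π vs (j + 1) v t (W₁ ++ W₂) := by
  obtain ⟨hW₁v, ⟨p1, pl, hp1, hpl, hsrc, hv'⟩, harr₁, hcol₁⟩ := hW₁
  have hne : W₁ ≠ [] := by rintro rfl; simp at hp1
  obtain ⟨hW₂v, q1, ql, hq1, hql, hsrc₂, hdst₂, hdep₂, harr₂, -⟩ := id hW₂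
  have ht₁₂ : t₁ ≤ t₂ := hdep₂ ▸ harr₂ ▸ (hW₂v.qdep_lt (List.mem_of_head? hq1) hql).le
  refine ⟨isValidWalk_append.mpr ⟨hW₁v, hW₂v, ?_⟩, ⟨p1, ql, ?_, ?_, hsrc, hdst₂⟩, ?_, ?_⟩
  · simp only [hpl, hq1, Option.mem_def, Option.some.injEq, forall_eq']
    exact ⟨hv'.trans hsrc₂.symm, hdep₂ ▸ harr₁ pl (List.mem_of_getLast? hpl)⟩
  · simp [List.head?_append, hp1]
  · simp [List.getLast?_append, hql]
  · intro q hq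
    rcases List.mem_append.mp hq with hq | hq
    · exact (harr₁ q hq).trans (ht₁₂.trans ht)
    · exact (hW₂.qarr_le q hq).trans ht
  · rw [visited_append hne]
    exact hW₂.colourOrdered_append hcol₁ hinj hv

lemma IsFhatWalk.isFstarWalk_one {t₁ t₂ t : ℕ} {v : V} {W : List (V × V × ℕ × ℕ)}
    (hW : IsFhatWalk F c {y | ∃ j' ≤ 0, y = π j'} vs v t₁ t₂ W)
    (hinj : Set.InjOn π (Set.Iic 1)) (hvs : c vs = π 0) (hv : c v = π 1) (ht : t₂ ≤ t) :
    IsFstarWalk F c π vs 1 v t W := by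
  obtain ⟨hWv, q1, ql, hq1, hql, hsrc, hdst, -, -, -⟩ := id hW
  refine ⟨hWv, ⟨q1, ql, hq1, hql, hsrc, hdst⟩, fun q hq => (hW.qarr_le q hq).trans ht, ?_⟩
  rw [visited_of_head? hq1, hsrc, ← List.singleton_append]
  exact hW.colourOrdered_append (colourOrdered_singleton hvs) hinj hv

lemma Fstar_succ_le_add {j t₁ t₂ t : ℕ} {v v' : V} (hinj : Set.InjOn π (Set.Iic (j + 1)))
    (hvs : c vs = π 0) (hv : c v = π (j + 1)) (hvvs : v ≠ vs) (hv' : c v' = π j) (ht : t₂ ≤ t) :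
    Fstar F c π vs (j + 1) v t ≤
      Fstar F c π vs j v' t₁ + FhatI F c {y | ∃ j' ≤ j, y = π j'} v' v t₁ t₂ := by
  rw [Fstar_of_ne hvvs, FhatI_eq]
  by_cases hv's : v' = vs
  · subst hv's
    obtain rfl : j = 0 := hinj (by simp) (by simp) (hv'.symm.trans hvs)
    simp only [Fstar_self, zero_add]
    refine sInf_le_sInf (Set.image_mono fun W hW => ?_)
    exact IsFhatWalk.isFstarWalk_one hW hinj hvs hv ht
  · rw [Fstar_of_ne hv's]
    refine ENat.le_sInf_add_sInf ?_
    rintro _ ⟨W₁, hW₁, rfl⟩ _ ⟨W₂, hW₂, rfl⟩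
    rw [← walkCost_append]
    exact sInf_le ⟨_, hW₁.append hW₂ hinj hv ht, rfl⟩

lemma Fstar_le_walkCost_of_append {i : ℕ} {A B : List (V × V × ℕ × ℕ)} {q : V × V × ℕ × ℕ}
    (hW : IsValidWalk F (A ++ q :: B)) (hsrc : ∀ a ∈ (A ++ q :: B).head?, qsrc a = vs)
    (hcol : ColourOrdered c π i (qsrc q) (A.map qsrc ++ [qsrc q])) :
    Fstar F c π vs i (qsrc q) (qdep q) ≤ walkCost F A := by
  by_cases hq : qsrc q = vs
  · rw [hq, Fstar_self]
    exact zero_le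
  obtain ⟨a, ha⟩ : ∃ a, A.head? = some a := by
    cases A with
    | nil => exact absurd (hsrc q (by simp)) hq
    | cons a A => exact ⟨a, rfl⟩
  obtain ⟨al, hal⟩ : ∃ al, A.getLast? = some al :=
    ⟨_, List.getLast?_eq_some_getLast fun h => by simp [h] at ha⟩
  obtain ⟨hA, -, hjoin⟩ := isValidWalk_append.mp hW
  obtain ⟨hdst, harr⟩ : Precedes al q := hjoin al hal q rfl
  rw [Fstar_of_ne hq]
  refine sInf_le ⟨A, ⟨hA, ⟨a, al, ha, hal, hsrc a (by simp [List.head?_append, ha]), hdst⟩,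
    fun x hx => (hA.qarr_le hx hal).trans harr, ?_⟩, rfl⟩
  rwa [visited_eq_map_qsrc (isValidWalk_iff.mp hA).1 hal, hdst]

lemma FhatI_le_walkCost {I : Set ℕ} {B : List (V × V × ℕ × ℕ)} {q ql : V × V × ℕ × ℕ}
    (hW : IsValidWalk F (q :: B)) (hl : (q :: B).getLast? = some ql)
    (hcol : ∀ w ∈ (q :: B).map qsrc, c w ∈ I) :
    FhatI F c I (qsrc q) (qdst ql) (qdep q) (qarr ql) ≤ walkCost F (q :: B) := by
  rw [FhatI_eq]
  refine sInf_le ⟨_, ⟨hW, q, ql, rfl, hl, rfl, rfl, rfl, rfl, fun w hw hwv => ?_⟩, rfl⟩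
  rw [visited_eq_map_qsrc (isValidWalk_iff.mp hW).1 hl] at hw
  rcases List.mem_append.mp hw with hw | hw
  · exact hcol w hw
  · exact absurd (List.mem_singleton.mp hw) hwv

lemma IsFstarWalk.exists_le_walkCost {j t : ℕ} {v : V} {W : List (V × V × ℕ × ℕ)}
    (hW : IsFstarWalk F c π vs (j + 1) v t W) (hinj : Set.InjOn π (Set.Iic (j + 1)))
    (hv : c v = π (j + 1)) (hvvs : v ≠ vs)
    (hdom : ∀ u w t₁ t₂, u ≠ w → F u w t₁ t₂ < ⊤ → 1 ≤ t₁) :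
    ∃ v' t₁ t₂, c v' = π j ∧ 1 ≤ t₁ ∧ t₁ < t₂ ∧ t₂ ≤ t ∧
      Fstar F c π vs j v' t₁ + FhatI F c {y | ∃ j' ≤ j, y = π j'} v' v t₁ t₂ ≤ walkCost F W := by
  obtain ⟨hWv, ⟨q₀, -, hq₀, -, hsrc₀, -⟩, harr, hL⟩ := hW
  obtain ⟨l₁, l₂, hLsplit, hl₁⟩ := hL.2.2.2
  have hl₁ne : l₁ ≠ [] := by
    rintro rfl
    rw [visited_of_head? hq₀, hsrc₀] at hLsplit
    exact hvvs (List.cons_eq_cons.mp hLsplit).1.symm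
  have hl₁col : ∀ w ∈ l₁, ∃ j' ≤ j, c w = π j' := fun w hw => by
    obtain ⟨j', hj', h⟩ := hL.1 w (by simp [hLsplit, hw])
    refine ⟨j', Nat.le_of_lt_succ (lt_of_le_of_ne hj' fun hj => hl₁ w hw ?_), h⟩
    rw [h, hj]
  obtain ⟨W', W'', ql, rfl, hql, rfl, hmap⟩ :=
    exists_append_of_visited_eq (isValidWalk_iff.mp hWv).1 hLsplit hl₁ne
  obtain ⟨v', hv'mem, hv', hcut⟩ := (hLsplit ▸ hL).exists_cut hl₁ hinj hv
  obtain ⟨A, q, B, rfl, rfl, hB⟩ :=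
    List.exists_split_last (fun q => qsrc q = v') (by simpa [← hmap] using hv'mem)
  obtain ⟨hW'v, -, -⟩ := isValidWalk_append.mp hWv
  obtain ⟨-, hqB, -⟩ := isValidWalk_append.mp hW'v
  have hql' : (q :: B).getLast? = some ql := by simpa [List.getLast?_append] using hql
  have hloop : qsrc q ≠ qdst q := qsrc_ne_qdst_of_last_departure (isValidWalk_iff.mp hqB).1 hql'
    (fun h => hinj.apply_ne_apply_succ le_rfl (hv'.symm.trans (h ▸ hv))) hB
  refine ⟨qsrc q, qdep q, qarr ql, hv',
    hdom _ _ _ _ hloop ((isValidWalk_iff.mp hqB).2 q (by simp)).2,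
    hqB.qdep_lt (by simp) hql', harr ql (List.mem_append_left _ (List.mem_of_getLast? hql)), ?_⟩
  have hsrc : ∀ a ∈ (A ++ q :: B).head?, qsrc a = vs := fun a ha => by
    rw [List.head?_append, ha, Option.some_or, Option.some_inj] at hq₀
    rwa [hq₀]
  calc _ ≤ walkCost F A + walkCost F (q :: B) :=
        add_le_add (Fstar_le_walkCost_of_append hW'v hsrc (hcut _ (B.map qsrc) (by simp [← hmap])))
          (FhatI_le_walkCost hqB hql' fun w hw => hl₁col w (by
            rw [← hmap, List.map_append]
            exact List.mem_append_right _ hw))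
    _ ≤ walkCost F (A ++ q :: B ++ W'') := by
        rw [walkCost_append, walkCost_append]
        exact le_self_add

end Recurrence

theorem fstar_recurrence_general {V : Type*} (F : V → V → ℕ → ℕ → ℕ∞) (T k : ℕ)
    (hdom : ∀ u v t₁ t₂, u ≠ v → F u v t₁ t₂ < ⊤ → 1 ≤ t₁ ∧ t₂ ≤ T)
    (vs : V) (c : V → ℕ) (hc0 : ∀ v, c v = 0 ↔ v = vs)
    (π : ℕ → ℕ) (hπ0 : π 0 = 0)
    (hπ : Set.BijOn π (Set.Icc 1 k) (Set.Icc 1 k)) :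
    ∀ i : ℕ, 1 ≤ i → i ≤ k → ∀ v : V, c v = π i → ∀ t : ℕ, 1 ≤ t → t ≤ T →
      Fstar F c π vs i v t =
        sInf {x : ℕ∞ | ∃ (v' : V) (t₁ t₂ : ℕ), c v' = π (i - 1) ∧
          1 ≤ t₁ ∧ t₁ < t₂ ∧ t₂ ≤ t ∧
          x = Fstar F c π vs (i - 1) v' t₁ +
            FhatI F c {y : ℕ | ∃ j ≤ i - 1, y = π j} v' v t₁ t₂} := by
  intro i hi hik v hv t _ _
  obtain ⟨j, rfl⟩ : ∃ j, i = j + 1 := ⟨i - 1, by omega⟩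
  simp only [Nat.add_sub_cancel]
  have hinj : Set.InjOn π (Set.Iic (j + 1)) :=
    (injOn_Iic_of_bijOn_Icc hπ0 hπ).mono (Set.Iic_subset_Iic.mpr hik)
  have hvs : c vs = π 0 := by rw [hπ0, hc0]
  have hvvs : v ≠ vs := fun h => hinj.apply_ne_apply_succ (Nat.zero_le j) (hvs.symm.trans (h ▸ hv))
  refine le_antisymm (le_sInf ?_) ?_
  · rintro _ ⟨v', t₁, t₂, hv', -, -, ht₂, rfl⟩
    exact Fstar_succ_le_add hinj hvs hv hvvs hv' ht₂
  · rw [Fstar_of_ne hvvs]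
    refine le_sInf ?_
    rintro _ ⟨W, hW, rfl⟩
    obtain ⟨v', t₁, t₂, hv', ht₁, ht₁₂, ht₂, hle⟩ :=
      hW.exists_le_walkCost hinj hv hvvs fun u w t₁ t₂ huw hF => (hdom u w t₁ t₂ huw hF).1
    exact le_trans (sInf_le ⟨v', t₁, t₂, hv', ht₁, ht₁₂, ht₂, rfl⟩) hle

/-- The colour-coding dynamic-programming recurrence: for `1 ≤ i ≤ k`, a vertex `v` of
colour `π i`, and a time `t`, the minimum cost `F*_π(v, t)` equals the minimum over
vertices `v'` of colour `π (i-1)` and times `1 ≤ t₁ < t₂ ≤ t` of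
`F*_π(v', t₁) + F̂_{{π 0, …, π (i-1)}}(v', v, t₁, t₂)`. -/
theorem fstar_recurrence {V : Type*} (F : V → V → ℕ → ℕ → ℕ∞) (T k : ℕ)
    (hF1 : ∀ u v t₁ t₂, t₂ ≤ t₁ → F u v t₁ t₂ = ⊤)
    (hF2 : ∀ v t₁ t₂, t₁ < t₂ → F v v t₁ t₂ = 0)
    (hF3 : ∀ u v t₁ t₂, u ≠ v → 0 < F u v t₁ t₂)
    (hdom : ∀ u v t₁ t₂, u ≠ v → F u v t₁ t₂ < ⊤ → 1 ≤ t₁ ∧ t₂ ≤ T)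
    (vs : V) (c : V → ℕ) (hck : ∀ v, c v ≤ k) (hc0 : ∀ v, c v = 0 ↔ v = vs)
    (π : ℕ → ℕ) (hπ0 : π 0 = 0)
    (hπ : Set.BijOn π (Set.Icc 1 k) (Set.Icc 1 k)) :
    ∀ i : ℕ, 1 ≤ i → i ≤ k → ∀ v : V, c v = π i → ∀ t : ℕ, 1 ≤ t → t ≤ T →
      Fstar F c π vs i v t =
        sInf {x : ℕ∞ | ∃ (v' : V) (t₁ t₂ : ℕ), c v' = π (i - 1) ∧
          1 ≤ t₁ ∧ t₁ < t₂ ∧ t₂ ≤ t ∧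
          x = Fstar F c π vs (i - 1) v' t₁ +
            FhatI F c {y : ℕ | ∃ j ≤ i - 1, y = π j} v' v t₁ t₂} :=
  fstar_recurrence_general F T k hdom vs c hc0 π hπ0 hπ
end

section
/- Let (G,F) be a temporal cost graph with vertex set V of size n, let v_s ≠ v_t be vertices of G, let k ≥ 2 with k ≤ n, let f ∈ ℕ, and let 𝓕 be a family of functions c : V ∖ {v_s,v_t} → {1,…,k−2} such that for every subset S ⊆ V ∖ {v_s,v_t} with |S| = k−2 there exists c ∈ 𝓕 that is injective on S. Then there is a valid walk on (G,F) from v_s to v_t of cost at most f visiting at least k distinct vertices if and only if there exist c ∈ 𝓕 and a valid walk on (G,F) from v_s to v_t of cost at most f that visits, for each colour j ∈ {1,…,k−2}, at least one vertex v with c(v) = j. -/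
/-!
The walk plays no role beyond the finite set `A` of vertices it visits, which contains `vs` and
`vt`; write `B = A \ {vs, vt}`, so `#A = #B + 2`. If `k ≤ #A`, pick `S ⊆ B` with `#S = k - 2`; some
`c ∈ 𝓕` is injective on `S`, and an injection of `S` into `{1, …, k-2}` is onto, so `B` meets every
colour class. Conversely, if `B` meets every colour class then `c` maps `B` onto `{1, …, k-2}`,
whence `k - 2 ≤ #B`.
-/

open Finset

section Walks

variable {V : Type*} {W : List (V × V × ℕ × ℕ)} {s t : V}

theorem WalkFrom.src_mem_visited (h : WalkFrom W s t) : s ∈ visited W := by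
  obtain ⟨q, -, hq, -, rfl, -⟩ := h
  cases W with
  | nil => simp at hq
  | cons q' W => simp_all [visited]

theorem WalkFrom.dst_mem_visited (h : WalkFrom W s t) : t ∈ visited W := by
  obtain ⟨-, q, -, hq, -, rfl⟩ := h
  cases W with
  | nil => simp at hq
  | cons q' W => exact List.mem_cons_of_mem _ (List.mem_map_of_mem (List.mem_of_getLast? hq))

end Walks

section ColourCoding

variable {α : Type*}

theorem Finset.card_sdiff_pair_add_two [DecidableEq α] {A : Finset α} {s t : α} (hst : s ≠ t)
    (hs : s ∈ A) (ht : t ∈ A) : #(A \ {s, t}) + 2 = #A := by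
  have hsub : {s, t} ⊆ A := insert_subset hs (singleton_subset_iff.2 ht)
  rw [card_sdiff_of_subset hsub, card_pair hst,
    Nat.sub_add_cancel (card_pair hst ▸ card_le_card hsub)]

theorem exists_surjOn_Icc_of_le_card {B : Finset α} {m : ℕ} {𝓕 : Set (α → ℕ)}
    (hrange : ∀ c ∈ 𝓕, Set.MapsTo c B (Set.Icc 1 m))
    (hhash : ∀ S ⊆ B, #S = m → ∃ c ∈ 𝓕, Set.InjOn c S) (hm : m ≤ #B) :
    ∃ c ∈ 𝓕, Set.SurjOn c B (Set.Icc 1 m) := by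
  obtain ⟨S, hSB, hS⟩ := exists_subset_card_eq hm
  obtain ⟨c, hc, hinj⟩ := hhash S hSB hS
  refine ⟨c, hc, ?_⟩
  have hsurj := surjOn_of_injOn_of_card_le (t := Icc 1 m) c
    (by simpa using (hrange c hc).mono_left (coe_subset.2 hSB)) hinj (by simp [hS])
  simpa using hsurj.mono (coe_subset.2 hSB) subset_rfl

theorem le_card_of_surjOn_Icc {B : Finset α} {m : ℕ} {c : α → ℕ}
    (hc : Set.SurjOn c B (Set.Icc 1 m)) : m ≤ #B := by
  simpa using card_le_card_of_surjOn c (t := Icc 1 m) (by simpa using hc)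

theorem surjOn_sdiff_pair_Icc_iff [DecidableEq α] {A : Finset α} {s t : α} {m : ℕ} {c : α → ℕ} :
    Set.SurjOn c ↑(A \ {s, t}) (Set.Icc 1 m) ↔
      ∀ j, 1 ≤ j → j ≤ m → ∃ w ∈ A, w ≠ s ∧ w ≠ t ∧ c w = j := by
  simp [Set.SurjOn, Set.subset_def, and_assoc]

end ColourCoding

theorem colour_coding_correct_general {V : Type*} [DecidableEq V]
    (F : V → V → ℕ → ℕ → ℕ∞)
    (vs vt : V) (hst : vs ≠ vt) (k : ℕ) (f : ℕ)
    (𝓕 : Set (V → ℕ))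
    (hrange : ∀ c ∈ 𝓕, ∀ v : V, v ≠ vs → v ≠ vt → 1 ≤ c v ∧ c v ≤ k - 2)
    (hhash : ∀ S : Finset V, vs ∉ S → vt ∉ S → S.card = k - 2 →
      ∃ c ∈ 𝓕, Set.InjOn c ↑S) :
    (∃ W, IsValidWalk F W ∧ WalkFrom W vs vt ∧ walkCost F W ≤ (f : ℕ∞) ∧
        k ≤ (visited W).toFinset.card) ↔
    (∃ c ∈ 𝓕, ∃ W, IsValidWalk F W ∧ WalkFrom W vs vt ∧ walkCost F W ≤ (f : ℕ∞) ∧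
        ∀ j : ℕ, 1 ≤ j → j ≤ k - 2 →
          ∃ w ∈ visited W, w ≠ vs ∧ w ≠ vt ∧ c w = j) := by
  have card_visited {W} (hW : WalkFrom W vs vt) :
      #((visited W).toFinset \ {vs, vt}) + 2 = #(visited W).toFinset :=
    card_sdiff_pair_add_two hst (List.mem_toFinset.2 hW.src_mem_visited)
      (List.mem_toFinset.2 hW.dst_mem_visited)
  constructor
  · rintro ⟨W, hW, hfrom, hcost, hk⟩
    have hrangeB : ∀ c ∈ 𝓕, Set.MapsTo c ↑((visited W).toFinset \ {vs, vt}) (Set.Icc 1 (k - 2)) :=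
      fun c hc w hw ↦ by
        obtain ⟨-, hw⟩ := mem_sdiff.1 (mem_coe.1 hw)
        simp only [mem_insert, mem_singleton, not_or] at hw
        exact hrange c hc w hw.1 hw.2
    have hhashB : ∀ S ⊆ (visited W).toFinset \ {vs, vt}, #S = k - 2 → ∃ c ∈ 𝓕, Set.InjOn c S :=
      fun S hS ↦ hhash S (fun h ↦ by simpa using hS h) (fun h ↦ by simpa using hS h)
    obtain ⟨c, hc, hsurj⟩ :=
      exists_surjOn_Icc_of_le_card hrangeB hhashB (by have hA := card_visited hfrom; omega)
    exact ⟨c, hc, W, hW, hfrom, hcost, by simpa using surjOn_sdiff_pair_Icc_iff.1 hsurj⟩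
  · rintro ⟨c, -, W, hW, hfrom, hcost, hcol⟩
    have hB := le_card_of_surjOn_Icc
      (surjOn_sdiff_pair_Icc_iff (A := (visited W).toFinset).2 (by simpa using hcol))
    have hA := card_visited hfrom
    exact ⟨W, hW, hfrom, hcost, by omega⟩

/-- Colour coding correctness: with `𝓕` a family of `(k-2)`-colourings of
`V ∖ {vs, vt}` such that every `(k-2)`-subset is rainbow under some member of `𝓕`,
there is a valid walk from `vs` to `vt` of cost at most `f` visiting at least `k`
distinct vertices iff for some `c ∈ 𝓕` there is a valid walk from `vs` to `vt` of cost
at most `f` visiting at least one vertex of each colour `1, …, k-2`. -/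
theorem colour_coding_correct {V : Type*} [Fintype V] [DecidableEq V]
    (F : V → V → ℕ → ℕ → ℕ∞) (n : ℕ) (hn : Fintype.card V = n)
    (hF1 : ∀ u v t₁ t₂, t₂ ≤ t₁ → F u v t₁ t₂ = ⊤)
    (hF2 : ∀ v t₁ t₂, t₁ < t₂ → F v v t₁ t₂ = 0)
    (hF3 : ∀ u v t₁ t₂, u ≠ v → 0 < F u v t₁ t₂)
    (vs vt : V) (hst : vs ≠ vt) (k : ℕ) (hk2 : 2 ≤ k) (hkn : k ≤ n) (f : ℕ)
    (𝓕 : Set (V → ℕ))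
    (hrange : ∀ c ∈ 𝓕, ∀ v : V, v ≠ vs → v ≠ vt → 1 ≤ c v ∧ c v ≤ k - 2)
    (hhash : ∀ S : Finset V, vs ∉ S → vt ∉ S → S.card = k - 2 →
      ∃ c ∈ 𝓕, Set.InjOn c ↑S) :
    (∃ W, IsValidWalk F W ∧ WalkFrom W vs vt ∧ walkCost F W ≤ (f : ℕ∞) ∧
        k ≤ (visited W).toFinset.card) ↔
    (∃ c ∈ 𝓕, ∃ W, IsValidWalk F W ∧ WalkFrom W vs vt ∧ walkCost F W ≤ (f : ℕ∞) ∧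
        ∀ j : ℕ, 1 ≤ j → j ≤ k - 2 →
          ∃ w ∈ visited W, w ≠ vs ∧ w ≠ vt ∧ c w = j) :=
  colour_coding_correct_general F vs vt hst k f 𝓕 hrange hhash
end
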